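/- arXiv:2602.10822 — 3 statements merged into one kernel-verified Lean document; each statement's English description precedes it below -/
import Mathlib

section
/- There exists a universal constant C > 0 such that for all zero-mean h ∈ A¹(𝕋) and V ∈ A³(𝕋), the function I(h,V) with Fourier coefficients Î(k) = Σ_{m∈ℤ} |k| |k−m|³ [sgn(k) sgn(k−m) − tanh(|k|) tanh(|k−m|)] ĥ(m) V̂(k−m) satisfies ‖I(h,V)‖_{A⁰} = Σ_{k∈ℤ} |Î(k)| ≤ C ‖h‖_{A¹} ‖V‖_{A³}. -/
open scoped BigOperators
open MeasureTheory Filter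

noncomputable section

/-- A zero-mean periodic function, identified with its sequence of Fourier coefficients. -/
abbrev Coeffs := ℤ → ℂ

/-- Wiener norm `‖f‖_{A^s} = Σ_k |k|^s |f̂(k)|`. -/
def Anorm (s : ℝ) (f : Coeffs) : ℝ :=
  ∑' k : ℤ, |(k : ℝ)| ^ s * ‖f k‖

/-- Membership in the Wiener space `A^s`. -/
def InA (s : ℝ) (f : Coeffs) : Prop :=
  Summable fun k : ℤ => |(k : ℝ)| ^ s * ‖f k‖

/-- `G₀ = Λ tanh Λ`, the Fourier multiplier with symbol `|k| tanh |k|`. -/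
def G0 (f : Coeffs) : Coeffs := fun k =>
  ((|(k : ℝ)| * Real.tanh |(k : ℝ)| : ℝ) : ℂ) * f k

/-- The `n`-th spatial derivative `∂ₓⁿ`, i.e. the multiplier with symbol `(i k)^n`. -/
def Dx (n : ℕ) (f : Coeffs) : Coeffs := fun k =>
  (Complex.I * (k : ℂ)) ^ n * f k

/-- Product of periodic functions = convolution of Fourier coefficient sequences. -/
def conv (f g : Coeffs) : Coeffs := fun k => ∑' m : ℤ, f m * g (k - m)

/-- `L₀ = 1 - Θ G₀ ∂ₓₓ`, the multiplier with symbol `1 + Θ |k|³ tanh |k|`. -/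
def L0 (Θ : ℝ) (f : Coeffs) : Coeffs := fun k =>
  ((1 + Θ * |(k : ℝ)| ^ (3 : ℕ) * Real.tanh |(k : ℝ)| : ℝ) : ℂ) * f k

/-- `L₀⁻¹`, the multiplier with symbol `(1 + Θ |k|³ tanh |k|)⁻¹`. -/
def L0inv (Θ : ℝ) (f : Coeffs) : Coeffs := fun k =>
  f k / ((1 + Θ * |(k : ℝ)| ^ (3 : ℕ) * Real.tanh |(k : ℝ)| : ℝ) : ℂ)

/-- `I(h,V) = G₀(h · G₀ ∂ₓₓ V) + ∂ₓ(h · ∂ₓₓₓ V)`. -/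
def Iop (h V : Coeffs) : Coeffs := fun k =>
  G0 (conv h (G0 (Dx 2 V))) k + Dx 1 (conv h (Dx 3 V)) k

/-- `I(h,V)` given directly by its Fourier coefficient formula. -/
def IopF (h V : Coeffs) : Coeffs := fun k =>
  ∑' m : ℤ,
    ((|(k : ℝ)| * |((k - m : ℤ) : ℝ)| ^ (3 : ℕ) *
      ((Int.sign k : ℝ) * (Int.sign (k - m) : ℝ) -
        Real.tanh |(k : ℝ)| * Real.tanh |((k - m : ℤ) : ℝ)|) : ℝ) : ℂ) *
      h m * V (k - m)

/-- The sign-interaction part `I_A`. -/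
def IA (h V : Coeffs) : Coeffs := fun k =>
  ∑' m : ℤ,
    ((|(k : ℝ)| * |((k - m : ℤ) : ℝ)| ^ (3 : ℕ) *
      ((Int.sign k : ℝ) * (Int.sign (k - m) : ℝ) - 1) : ℝ) : ℂ) *
      h m * V (k - m)

/-- The smooth-remainder part `I_B`. -/
def IB (h V : Coeffs) : Coeffs := fun k =>
  ∑' m : ℤ,
    ((|(k : ℝ)| * |((k - m : ℤ) : ℝ)| ^ (3 : ℕ) *
      (1 - Real.tanh |(k : ℝ)| * Real.tanh |((k - m : ℤ) : ℝ)|) : ℝ) : ℂ) *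
      h m * V (k - m)

/-- For a given profile `h`, the operator `L_h U = L₀ U + σ Θ I(h,U)`. -/
def Lop (Θ σ : ℝ) (h U : Coeffs) : Coeffs := fun k =>
  L0 Θ U k + ((σ * Θ : ℝ) : ℂ) * Iop h U k

/-- `N(h) = -χ G₀ h + σχ (G₀(h · G₀ h) + ∂ₓ(h · ∂ₓ h))`. -/
def Nop (χ σ : ℝ) (h : Coeffs) : Coeffs := fun k =>
  -(χ : ℂ) * G0 h k +
    ((σ * χ : ℝ) : ℂ) * (G0 (conv h (G0 h)) k + Dx 1 (conv h (Dx 1 h)) k)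

/-- `N_λ(h)`, the weakly nonlinear right-hand side with elasticity. -/
def Nlam (lam χ σ : ℝ) (h : Coeffs) : Coeffs := fun k =>
  -(χ : ℂ) * G0 h k - ((lam / 4 : ℝ) : ℂ) * G0 (Dx 4 h) k
    + ((σ * χ : ℝ) : ℂ) * (G0 (conv h (G0 h)) k + Dx 1 (conv h (Dx 1 h)) k)
    + ((σ * lam / 4 : ℝ) : ℂ) *
        (G0 (conv h (G0 (Dx 4 h))) k + Dx 1 (conv h (Dx 5 h)) k)

/-- Fourier projection onto modes `|k| ≤ N`. -/
def PN (N : ℕ) (f : Coeffs) : Coeffs := fun k => if |k| ≤ (N : ℤ) then f k else 0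

/-- Truncated nonlinearity `F_N(h)` of the Galerkin approximation. -/
def FN (lam χ σ : ℝ) (N : ℕ) (h : Coeffs) : Coeffs := fun k =>
  -(χ : ℂ) * G0 h k - ((lam / 4 : ℝ) : ℂ) * G0 (Dx 4 (PN N h)) k
    + ((σ * χ : ℝ) : ℂ) * (G0 (conv h (G0 h)) k + Dx 1 (conv h (Dx 1 h)) k)
    + ((σ * lam / 4 : ℝ) : ℂ) *
        (G0 (conv h (G0 (Dx 4 (PN N h)))) k + Dx 1 (conv h (Dx 5 (PN N h))) k)

/-- `μ = L₀⁻¹(-χ G₀ h - (λ/4) G₀ ∂ₓ⁴ h)`. -/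
def muOf (lam χ Θ : ℝ) (h : Coeffs) : Coeffs :=
  L0inv Θ (fun k => -(χ : ℂ) * G0 h k - ((lam / 4 : ℝ) : ℂ) * G0 (Dx 4 h) k)

/-- Right-hand side of the second weakly nonlinear model (integrated form). -/
def RHS2 (lam χ Θ σ : ℝ) (h : Coeffs) : Coeffs :=
  L0inv Θ (fun k => Nlam lam χ σ h k - ((σ * Θ : ℝ) : ℂ) *
    (G0 (conv h (G0 (Dx 2 (muOf lam χ Θ h)))) k +
      Dx 1 (conv h (Dx 3 (muOf lam χ Θ h))) k))

/-- Thin-film operator `L_h U = U + √δ Θ ∂ₓ((1+εh) ∂ₓ³ U)`. -/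
def Lthin (δ Θ ε : ℝ) (h U : Coeffs) : Coeffs := fun k =>
  U k + ((Real.sqrt δ * Θ : ℝ) : ℂ) *
    Dx 1 (fun j => Dx 3 U j + (ε : ℂ) * conv h (Dx 3 U) j) k

/-- Thin-film nonlinearity `N_{δ,ε}(h) = √δ ∂ₓ((1+εh) ∂ₓ(χh + (λ/4)∂ₓ⁴h))`. -/
def Nthin (δ ε χ lam : ℝ) (h : Coeffs) : Coeffs :=
  fun k => ((Real.sqrt δ : ℝ) : ℂ) *
    Dx 1 (fun j =>
      Dx 1 (fun m => (χ : ℂ) * h m + ((lam / 4 : ℝ) : ℂ) * Dx 4 h m) j +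
      (ε : ℂ) * conv h (Dx 1 (fun m => (χ : ℂ) * h m + ((lam / 4 : ℝ) : ℂ) * Dx 4 h m)) j) k

/-- Truncated thin-film nonlinearity `N^N_{δ,ε}(h)`. -/
def NthinN (δ ε χ lam : ℝ) (N : ℕ) (h : Coeffs) : Coeffs :=
  fun k => ((Real.sqrt δ : ℝ) : ℂ) *
    Dx 1 (fun j =>
      Dx 1 (fun m => (χ : ℂ) * h m + ((lam / 4 : ℝ) : ℂ) * Dx 4 (PN N h) m) j +
      (ε : ℂ) * conv h (Dx 1 (fun m => (χ : ℂ) * h m + ((lam / 4 : ℝ) : ℂ) * Dx 4 (PN N h) m)) j) k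

/-- Inverse of `L⋆ = I + √δ Θ ∂ₓ⁴`, the multiplier with symbol `(1 + √δ Θ k⁴)⁻¹`. -/
def LstarInv (δ Θ : ℝ) (f : Coeffs) : Coeffs := fun k =>
  f k / ((1 + Real.sqrt δ * Θ * (k : ℝ) ^ (4 : ℕ) : ℝ) : ℂ)

/-- Continuity of a curve of coefficients with respect to the `A^s` norm, on a set `S ⊆ ℝ`. -/
def ContOnA (s : ℝ) (S : Set ℝ) (h : ℝ → Coeffs) : Prop :=
  ∀ t ∈ S, ∀ ε > 0, ∃ δ > 0, ∀ t' ∈ S, |t' - t| < δ →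
    Anorm s (fun k => h t' k - h t k) < ε

/-!
Write `n = k - m`. The symbol vanishes if `k = 0` or `n = 0`, and otherwise
`|w(k, m)| ≤ 7 |m| |n|³`. If `k` and `n` have opposite signs then `|m| = |k| + |n|` and the
bracket is at most `2`. If they have the same sign the bracket is `1 - tanh |k| tanh |n|`,
which is at most `(1 - tanh |k|) + (1 - tanh |n|)`; since `x⁴ (1 - tanh x)` is bounded, the
first term pays for the factor `|k|`, and the second for the excess of `|k| ≤ |m| + |n|`
over `|m|`. As `ĥ(0) = 0`, the coefficients of `I(h, V)` are then dominated by the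
convolution of `7 |m| |ĥ(m)|` with `|n|³ |V̂(n)|`, whose `ℓ¹` norm is the product of the two
`ℓ¹` norms.
-/

namespace Real

theorem tanh_nonneg {x : ℝ} (hx : 0 ≤ x) : 0 ≤ tanh x := by
  rw [tanh_eq_sinh_div_cosh]
  exact div_nonneg (sinh_nonneg_iff.mpr hx) (cosh_pos x).le

theorem one_sub_tanh_mul_exp_add_one (x : ℝ) : (1 - tanh x) * (exp (2 * x) + 1) = 2 := by
  have hx : exp (2 * x) = exp x * exp x := by rw [← exp_add]; ring_nf
  rw [tanh_eq, exp_neg, hx]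
  field_simp
  ring

theorem pow_four_mul_one_sub_tanh_le {x : ℝ} (hx : 0 ≤ x) : x ^ 4 * (1 - tanh x) ≤ 3 := by
  have hexp : (2 * x) ^ 4 / 24 ≤ exp (2 * x) := by
    simpa [Nat.factorial] using pow_div_factorial_le_exp (2 * x) (by positivity) 4
  have htanh : 0 ≤ 1 - tanh x := by linarith [tanh_lt_one x]
  nlinarith [one_sub_tanh_mul_exp_add_one x]

end Real

open Real

theorem mul_pow_three_mul_one_sub_tanh_mul_tanh_le {a b c : ℝ} (ha : 1 ≤ a) (hb : 1 ≤ b)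
    (hc : 1 ≤ c) (habc : a ≤ c + b) : a * b ^ 3 * (1 - tanh a * tanh b) ≤ 7 * (c * b ^ 3) := by
  have hta : 0 ≤ 1 - tanh a := by linarith [tanh_lt_one a]
  have htb : 0 ≤ 1 - tanh b := by linarith [tanh_lt_one b]
  have hsplit : 1 - tanh a * tanh b ≤ (1 - tanh a) + (1 - tanh b) := by
    nlinarith [mul_nonneg hta htb]
  have hA : a * (1 - tanh a) ≤ 3 := by
    nlinarith [pow_four_mul_one_sub_tanh_le (by linarith : 0 ≤ a),
      pow_le_pow_right₀ ha (show 1 ≤ 4 by norm_num)]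
  have hB : b ^ 4 * (1 - tanh b) ≤ 3 := pow_four_mul_one_sub_tanh_le (by linarith)
  have hb3 : 1 ≤ b ^ 3 := one_le_pow₀ hb
  have hab : 0 ≤ a * b ^ 3 := by positivity
  calc a * b ^ 3 * (1 - tanh a * tanh b)
      ≤ a * b ^ 3 * ((1 - tanh a) + (1 - tanh b)) := mul_le_mul_of_nonneg_left hsplit hab
    _ = b ^ 3 * (a * (1 - tanh a)) + a * b ^ 3 * (1 - tanh b) := by ring
    _ ≤ b ^ 3 * 3 + (c + b) * b ^ 3 * (1 - tanh b) := by gcongr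
    _ = 3 * b ^ 3 + c * b ^ 3 * (1 - tanh b) + b ^ 4 * (1 - tanh b) := by ring
    _ ≤ 3 * b ^ 3 + c * b ^ 3 + 3 := by
        have : c * b ^ 3 * (1 - tanh b) ≤ c * b ^ 3 :=
          mul_le_of_le_one_right (by positivity) (by linarith [tanh_nonneg (by linarith : 0 ≤ b)])
        linarith
    _ ≤ 7 * (c * b ^ 3) := by nlinarith

def IopSymbol (k n : ℤ) : ℝ :=
  |(k : ℝ)| * |(n : ℝ)| ^ 3 *
    ((Int.sign k : ℝ) * (Int.sign n : ℝ) - tanh |(k : ℝ)| * tanh |(n : ℝ)|)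

theorem IopF_apply (h V : Coeffs) (k : ℤ) :
    IopF h V k = ∑' m : ℤ, (IopSymbol k (k - m) : ℂ) * h m * V (k - m) := rfl

theorem one_le_abs_intCast {k : ℤ} (hk : k ≠ 0) : 1 ≤ |(k : ℝ)| := by
  exact_mod_cast Int.one_le_abs hk

theorem abs_IopSymbol_le (k m : ℤ) (hm : m ≠ 0) :
    |IopSymbol k (k - m)| ≤ 7 * (|(m : ℝ)| * |((k - m : ℤ) : ℝ)| ^ 3) := by
  set n := k - m with hn
  have hsign : (Int.sign k : ℝ) * Int.sign n = Int.sign (k * n) := by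
    push_cast [Int.sign_mul]; rfl
  have htk := tanh_nonneg (abs_nonneg (k : ℝ))
  have htn := tanh_nonneg (abs_nonneg (n : ℝ))
  have htk1 := tanh_lt_one |(k : ℝ)|
  have htn1 := tanh_lt_one |(n : ℝ)|
  rcases lt_trichotomy (k * n) 0 with hneg | hzero | hpos
  · have hkm : |(k : ℝ)| ≤ |(m : ℝ)| := by
      have : |k| ≤ |m| := by
        rcases mul_neg_iff.mp hneg with h | h <;> simp only [abs_eq_max_neg] <;> omega
      exact_mod_cast this
    have hval : IopSymbol k n =
        -(|(k : ℝ)| * |(n : ℝ)| ^ 3 * (1 + tanh |(k : ℝ)| * tanh |(n : ℝ)|)) := by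
      rw [IopSymbol, hsign, Int.sign_eq_neg_one_of_neg hneg]
      push_cast
      ring
    rw [hval, abs_neg, abs_of_nonneg (by positivity)]
    have hmn : 0 ≤ |(m : ℝ)| * |(n : ℝ)| ^ 3 := by positivity
    calc |(k : ℝ)| * |(n : ℝ)| ^ 3 * (1 + tanh |(k : ℝ)| * tanh |(n : ℝ)|)
        ≤ |(k : ℝ)| * |(n : ℝ)| ^ 3 * 2 := by gcongr; nlinarith
      _ ≤ |(m : ℝ)| * |(n : ℝ)| ^ 3 * 2 := by gcongr
      _ ≤ 7 * (|(m : ℝ)| * |(n : ℝ)| ^ 3) := by linarith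
  · have hval : IopSymbol k n = 0 := by
      rcases mul_eq_zero.mp hzero with h0 | h0 <;> simp [IopSymbol, h0]
    rw [hval, abs_zero]
    positivity
  · have hk : k ≠ 0 := by rintro rfl; simp at hpos
    have hn0 : n ≠ 0 := by rintro h; simp [h] at hpos
    have htri : |(k : ℝ)| ≤ |(m : ℝ)| + |(n : ℝ)| := by
      simpa [hn] using abs_add_le (m : ℝ) (k - m)
    have hval : IopSymbol k n =
        |(k : ℝ)| * |(n : ℝ)| ^ 3 * (1 - tanh |(k : ℝ)| * tanh |(n : ℝ)|) := by
      rw [IopSymbol, hsign, Int.sign_eq_one_of_pos hpos, Int.cast_one]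
    have htt : tanh |(k : ℝ)| * tanh |(n : ℝ)| < 1 :=
      mul_lt_one_of_nonneg_of_lt_one_left htk htk1 htn1.le
    rw [hval, abs_of_nonneg (mul_nonneg (by positivity) (by linarith))]
    exact mul_pow_three_mul_one_sub_tanh_mul_tanh_le (one_le_abs_intCast hk)
      (one_le_abs_intCast hn0) (one_le_abs_intCast hm) htri

theorem tsum_norm_tsum_le_of_norm_le_conv {α E : Type*} [AddCommGroup α]
    [SeminormedAddCommGroup E] {f : α → α → E} {F G : α → ℝ} (hF₀ : 0 ≤ F) (hG₀ : 0 ≤ G)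
    (hF : Summable F) (hG : Summable G) (hf : ∀ k m, ‖f k m‖ ≤ F m * G (k - m)) :
    ∑' k, ‖∑' m, f k m‖ ≤ (∑' m, F m) * ∑' n, G n := by
  let e : α × α ≃ α × α :=
    { toFun := fun p => (p.2, p.1 - p.2)
      invFun := fun q => (q.1 + q.2, q.1)
      left_inv := fun p => by simp
      right_inv := fun q => by simp }
  set g : α × α → ℝ := fun p => F p.2 * G (p.1 - p.2)
  have hprod : Summable fun q : α × α => F q.1 * G q.2 := hF.mul_of_nonneg hG hF₀ hG₀
  have hg : Summable g := e.summable_iff.mpr hprod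
  have hinner : ∀ k, ‖∑' m, f k m‖ ≤ ∑' m, g (k, m) := fun k =>
    tsum_of_norm_bounded (hg.prod_factor k).hasSum (hf k)
  calc ∑' k, ‖∑' m, f k m‖
      ≤ ∑' k, ∑' m, g (k, m) :=
        (hg.prod.of_nonneg_of_le (fun _ => norm_nonneg _) hinner).tsum_le_tsum hinner hg.prod
    _ = ∑' p, g p := (hg.tsum_prod' hg.prod_factor).symm
    _ = ∑' q : α × α, F q.1 * G q.2 := e.tsum_eq fun q => F q.1 * G q.2
    _ = (∑' m, F m) * ∑' n, G n := (hF.tsum_mul_tsum hG hprod).symm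

/-- the symbol-cancellation estimate
`‖I(h,V)‖_{A⁰} ≤ C ‖h‖_{A¹} ‖V‖_{A³}` for zero-mean `h ∈ A¹` and `V ∈ A³`,
where `I(h,V)` is given by its Fourier coefficient formula. -/
theorem I_commutator_bound :
    ∃ C > 0, ∀ h V : Coeffs, h 0 = 0 → V 0 = 0 → InA 1 h → InA 3 V →
      (∑' k : ℤ, ‖IopF h V k‖) ≤ C * Anorm 1 h * Anorm 3 V := by
  refine ⟨7, by norm_num, fun h V h0 _ hh hV => ?_⟩
  simp only [InA, Anorm, Real.rpow_one, Real.rpow_ofNat] at hh hV ⊢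
  have hbound : ∀ k m : ℤ, ‖(IopSymbol k (k - m) : ℂ) * h m * V (k - m)‖ ≤
      7 * (|(m : ℝ)| * ‖h m‖) * (|((k - m : ℤ) : ℝ)| ^ 3 * ‖V (k - m)‖) := by
    intro k m
    rcases eq_or_ne m 0 with rfl | hm
    · simp [h0]
    rw [norm_mul, norm_mul, Complex.norm_real, Real.norm_eq_abs]
    calc |IopSymbol k (k - m)| * ‖h m‖ * ‖V (k - m)‖
        ≤ 7 * (|(m : ℝ)| * |((k - m : ℤ) : ℝ)| ^ 3) * ‖h m‖ * ‖V (k - m)‖ := by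
          gcongr
          exact abs_IopSymbol_le k m hm
      _ = _ := by ring
  simp_rw [IopF_apply]
  calc ∑' k : ℤ, ‖∑' m : ℤ, (IopSymbol k (k - m) : ℂ) * h m * V (k - m)‖
      ≤ (∑' m : ℤ, 7 * (|(m : ℝ)| * ‖h m‖)) * ∑' n : ℤ, |(n : ℝ)| ^ 3 * ‖V n‖ :=
        tsum_norm_tsum_le_of_norm_le_conv (fun _ => by positivity) (fun _ => by positivity)
          (hh.mul_left 7) hV hbound
    _ = 7 * (∑' m : ℤ, |(m : ℝ)| * ‖h m‖) * ∑' n : ℤ, |(n : ℝ)| ^ 3 * ‖V n‖ := by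
        rw [tsum_mul_left]
end
end

section
/- For all zero-mean h ∈ A¹(𝕋) and V ∈ A³(𝕋), the sign-interaction part I_A with Fourier coefficients Î_A(k) = Σ_{m∈ℤ} |k| |k−m|³ (sgn(k) sgn(k−m) − 1) ĥ(m) V̂(k−m) satisfies Σ_{k∈ℤ} |Î_A(k)| ≤ 2 ‖h‖_{A¹} ‖V‖_{A³}. (The proof uses that sgn(k) sgn(k−m) − 1 vanishes unless sgn(k) ≠ sgn(k−m), in which case |k| ≤ |m|.) -/
open scoped BigOperators
open MeasureTheory Filter

noncomputable section

/-!
The factor `sgn k · sgn (k - m) - 1` vanishes unless `k` and `k - m` have opposite signs, and then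
it has absolute value `2` and `|k| ≤ |m|`. So the `m`-th term of `Î_A(k)` is bounded by
`2 |m| |ĥ(m)| · |k - m|³ |V̂(k - m)|`, and summing over `k` is Young's inequality `ℓ¹ * ℓ¹ ⊆ ℓ¹`,
proved by the shear `(m, j) ↦ (j + m, m)` and Fubini for absolutely summable double series.
-/

theorem Int.abs_mul_abs_sign_mul_sign_sub_one_le (k j : ℤ) :
    |k| * |k.sign * j.sign - 1| ≤ 2 * |k - j| := by
  rcases lt_trichotomy k 0 with hk | rfl | hk <;> rcases lt_trichotomy j 0 with hj | rfl | hj <;>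
    simp [Int.sign_eq_neg_one_of_neg, Int.sign_eq_one_of_pos, *] <;> grind

theorem hasSum_mul_apply_sub_of_nonneg {G : Type*} [AddGroup G] {a b : G → ℝ}
    (ha : Summable a) (hb : Summable b) (ha0 : 0 ≤ a) (hb0 : 0 ≤ b) :
    HasSum (fun p : G × G => a p.2 * b (p.1 - p.2)) ((∑' m, a m) * ∑' j, b j) := by
  let e : G × G ≃ G × G :=
    ((Equiv.refl G).prodShear fun m => Equiv.addRight m).trans (Equiv.prodComm G G)
  have he : (fun p : G × G => a p.2 * b (p.1 - p.2)) ∘ e = fun p => a p.1 * b p.2 := by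
    ext p; simp [e]
  rw [← e.hasSum_iff, he]
  exact ha.hasSum.mul hb.hasSum (ha.mul_of_nonneg hb ha0 hb0)

theorem tsum_norm_tsum_le_of_norm_le_mul_apply_sub {G E : Type*} [AddGroup G]
    [SeminormedAddCommGroup E] {F : G → G → E} {a b : G → ℝ}
    (ha : Summable a) (hb : Summable b) (ha0 : 0 ≤ a) (hb0 : 0 ≤ b)
    (hF : ∀ k m, ‖F k m‖ ≤ a m * b (k - m)) :
    ∑' k, ‖∑' m, F k m‖ ≤ (∑' m, a m) * ∑' j, b j := by
  have hab := hasSum_mul_apply_sub_of_nonneg ha hb ha0 hb0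
  have hF' : Summable fun p : G × G => ‖F p.1 p.2‖ :=
    hab.summable.of_nonneg_of_le (fun _ => norm_nonneg _) fun p => hF p.1 p.2
  have hrows : Summable fun k => ∑' m, ‖F k m‖ := hF'.prod
  have hrow (k : G) : ‖∑' m, F k m‖ ≤ ∑' m, ‖F k m‖ :=
    norm_tsum_le_tsum_norm (hF'.prod_factor k)
  have hnorm : Summable fun k => ‖∑' m, F k m‖ :=
    hrows.of_nonneg_of_le (fun _ => norm_nonneg _) hrow
  calc ∑' k, ‖∑' m, F k m‖ ≤ ∑' k, ∑' m, ‖F k m‖ := hnorm.tsum_le_tsum hrow hrows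
    _ = ∑' p : G × G, ‖F p.1 p.2‖ := hF'.tsum_prod.symm
    _ ≤ (∑' m, a m) * ∑' j, b j := by
      refine hasSum_le ?_ hF'.hasSum hab
      exact fun p => hF p.1 p.2

theorem norm_IA_term_le (h V : Coeffs) (k m : ℤ) :
    ‖((|(k : ℝ)| * |((k - m : ℤ) : ℝ)| ^ (3 : ℕ) *
        ((Int.sign k : ℝ) * (Int.sign (k - m) : ℝ) - 1) : ℝ) : ℂ) * h m * V (k - m)‖ ≤
      2 * (|(m : ℝ)| ^ (1 : ℝ) * ‖h m‖) * (|((k - m : ℤ) : ℝ)| ^ (3 : ℝ) * ‖V (k - m)‖) := by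
  have hsign : |(k : ℝ)| * |(Int.sign k : ℝ) * (Int.sign (k - m) : ℝ) - 1| ≤ 2 * |(m : ℝ)| := by
    have := Int.abs_mul_abs_sign_mul_sign_sub_one_le k (k - m)
    rw [sub_sub_cancel] at this
    exact_mod_cast this
  rw [norm_mul, norm_mul, Complex.norm_real, Real.norm_eq_abs, abs_mul, abs_mul, abs_pow, abs_abs,
    abs_abs, Real.rpow_one, show (3 : ℝ) = (3 : ℕ) by norm_num, Real.rpow_natCast]
  calc _ = |(k : ℝ)| * |(Int.sign k : ℝ) * (Int.sign (k - m) : ℝ) - 1| *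
          (|((k - m : ℤ) : ℝ)| ^ 3 * ‖h m‖ * ‖V (k - m)‖) := by ring
    _ ≤ 2 * |(m : ℝ)| * (|((k - m : ℤ) : ℝ)| ^ 3 * ‖h m‖ * ‖V (k - m)‖) := by gcongr
    _ = _ := by ring

theorem IA_bound_general (h V : Coeffs) (hh : InA 1 h) (hV : InA 3 V) :
    (∑' k : ℤ, ‖IA h V k‖) ≤ 2 * Anorm 1 h * Anorm 3 V := by
  have := tsum_norm_tsum_le_of_norm_le_mul_apply_sub (hh.mul_left 2) hV
    (fun m => by positivity) (fun j => by positivity) (norm_IA_term_le h V)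
  rwa [tsum_mul_left] at this

/-- the sign-interaction part satisfies
`Σ_k |Î_A(k)| ≤ 2 ‖h‖_{A¹} ‖V‖_{A³}` for zero-mean `h ∈ A¹`, `V ∈ A³`. -/
theorem IA_bound (h V : Coeffs) (hh0 : h 0 = 0) (hV0 : V 0 = 0)
    (hh : InA 1 h) (hV : InA 3 V) :
    (∑' k : ℤ, ‖IA h V k‖) ≤ 2 * Anorm 1 h * Anorm 3 V :=
  IA_bound_general h V hh hV
end
end

section
/- There exists a universal constant C > 0 such that for all zero-mean h ∈ A¹(𝕋) and V ∈ A³(𝕋), the smooth-remainder part I_B with Fourier coefficients Î_B(k) = Σ_{m∈ℤ} |k| |k−m|³ (1 − tanh(|k|) tanh(|k−m|)) ĥ(m) V̂(k−m) satisfies Σ_{k∈ℤ} |Î_B(k)| ≤ C (‖h‖_{A¹} + ‖h‖_{A⁰}) ‖V‖_{A³}. -/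
open scoped BigOperators
open MeasureTheory Filter

noncomputable section

/-!
Since `1 - tanh x tanh y = (1 - tanh x) + tanh x (1 - tanh y)` and `t (1 - tanh t) ≤ 1` for
`t ≥ 0`, the factor `|k|` in the symbol of `I_B` costs at most `2 + ||k| - |k - m|| ≤ 2 + |m|`,
which is carried by `ĥ(m)`. Hence `|Î_B(k)|` is dominated by the convolution of
`2 (|m| + 1) |ĥ(m)|` with `|n|³ |V̂(n)|`, and Young's inequality `ℓ¹ * ℓ¹ ⊆ ℓ¹` gives the bound
with `C = 2`.
-/

namespace Real

lemma tanh_nonneg_s11 {t : ℝ} (ht : 0 ≤ t) : 0 ≤ tanh t := by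
  rw [tanh_eq_sinh_div_cosh]
  exact div_nonneg (sinh_nonneg_iff.2 ht) (cosh_pos t).le

lemma one_sub_tanh_eq_exp_neg_div_cosh (t : ℝ) : 1 - tanh t = exp (-t) / cosh t := by
  rw [tanh_eq_sinh_div_cosh, ← cosh_sub_sinh t]
  field_simp [(cosh_pos t).ne']

lemma mul_one_sub_tanh_le_one {t : ℝ} (ht : 0 ≤ t) : t * (1 - tanh t) ≤ 1 :=
  calc t * (1 - tanh t) = t * exp (-t) / cosh t := by
        rw [one_sub_tanh_eq_exp_neg_div_cosh, mul_div_assoc]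
    _ ≤ t * exp (-t) := div_le_self (by positivity) (one_le_cosh t)
    _ ≤ 1 := by
        rw [exp_neg, ← div_eq_mul_inv, div_le_one (exp_pos t)]
        linarith [add_one_le_exp t]

lemma mul_one_sub_tanh_mul_tanh_le {x y : ℝ} (hx : 0 ≤ x) (hy : 0 ≤ y) :
    x * (1 - tanh x * tanh y) ≤ 2 + |x - y| := by
  have hxy : x ≤ y + |x - y| := by linarith [le_abs_self (x - y)]
  have h1y : 0 ≤ 1 - tanh y := sub_nonneg.2 (tanh_lt_one y).le
  calc x * (1 - tanh x * tanh y)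
      = x * (1 - tanh x) + tanh x * (x * (1 - tanh y)) := by ring
    _ ≤ 1 + x * (1 - tanh y) :=
        add_le_add (mul_one_sub_tanh_le_one hx)
          (mul_le_of_le_one_left (mul_nonneg hx h1y) (tanh_lt_one x).le)
    _ ≤ 1 + (y + |x - y|) * (1 - tanh y) := by gcongr
    _ = 1 + y * (1 - tanh y) + |x - y| * (1 - tanh y) := by ring
    _ ≤ 1 + 1 + |x - y| * 1 := by
        gcongr
        · exact mul_one_sub_tanh_le_one hy
        · linarith [tanh_nonneg_s11 hy]
    _ = 2 + |x - y| := by ring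

end Real

section Convolution

variable {G : Type*} [AddCommGroup G] {a b : G → ℝ}

lemma hasSum_mul_sub (ha : 0 ≤ a) (hb : 0 ≤ b) (has : Summable a) (hbs : Summable b) :
    HasSum (fun p : G × G => a p.2 * b (p.1 - p.2)) ((∑' m, a m) * ∑' n, b n) := by
  have hprod := has.hasSum.mul hbs.hasSum (has.mul_of_nonneg hbs ha hb)
  -- pull back along the shear `(k, m) ↦ (m, k - m)`
  exact ((Equiv.prodComm G G).trans
    (Equiv.prodShear (Equiv.refl G) Equiv.subRight)).hasSum_iff.2 hprod

lemma tsum_norm_tsum_le_of_norm_le_mul {E : Type*} [NormedAddCommGroup E] {c : G → G → E}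
    (ha : 0 ≤ a) (hb : 0 ≤ b) (has : Summable a) (hbs : Summable b)
    (hc : ∀ k m, ‖c k m‖ ≤ a m * b (k - m)) :
    ∑' k, ‖∑' m, c k m‖ ≤ (∑' m, a m) * ∑' n, b n := by
  have hsum := hasSum_mul_sub ha hb has hbs
  have hfiber k : Summable fun m => a m * b (k - m) := hsum.summable.prod_factor k
  have hconv := hsum.prod_fiberwise fun k => (hfiber k).hasSum
  have hnorm k : ‖∑' m, c k m‖ ≤ ∑' m, a m * b (k - m) :=
    tsum_of_norm_bounded (hfiber k).hasSum (hc k)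
  rw [← hconv.tsum_eq]
  exact Summable.tsum_le_tsum hnorm
    (hconv.summable.of_nonneg_of_le (fun _ => norm_nonneg _) hnorm) hconv.summable

end Convolution

namespace InA

variable {f : Coeffs}

lemma hasSum_pow {n : ℕ} (hf : InA n f) :
    HasSum (fun k : ℤ => |(k : ℝ)| ^ n * ‖f k‖) (Anorm n f) := by
  simpa only [InA, Anorm, Real.rpow_natCast] using hf.hasSum

lemma summable_norm (hf : InA 1 f) : Summable fun k : ℤ => ‖f k‖ := by
  refine Summable.of_norm_bounded_eventually hf ?_
  filter_upwards [eventually_cofinite_ne 0] with k hk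
  have hk1 : (1 : ℝ) ≤ |(k : ℝ)| := by exact_mod_cast Int.one_le_abs hk
  rw [norm_norm, Real.rpow_one]
  exact le_mul_of_one_le_left (norm_nonneg _) hk1

lemma hasSum_abs_add_one_mul_norm (hf : InA 1 f) :
    HasSum (fun k : ℤ => (|(k : ℝ)| + 1) * ‖f k‖) (Anorm 1 f + Anorm 0 f) := by
  have h1 : HasSum (fun k : ℤ => |(k : ℝ)| * ‖f k‖) (Anorm 1 f) := by
    simpa using hasSum_pow (n := 1) (by simpa using hf)
  have h0 : HasSum (fun k : ℤ => ‖f k‖) (Anorm 0 f) := by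
    simpa [Anorm] using hf.summable_norm.hasSum
  simpa only [add_mul, one_mul] using h1.add h0

end InA

def IBsymbol (k m : ℤ) : ℝ :=
  |(k : ℝ)| * |((k - m : ℤ) : ℝ)| ^ (3 : ℕ) *
    (1 - Real.tanh |(k : ℝ)| * Real.tanh |((k - m : ℤ) : ℝ)|)

lemma IBsymbol_nonneg (k m : ℤ) : 0 ≤ IBsymbol k m := by
  have htanh : Real.tanh |(k : ℝ)| * Real.tanh |((k - m : ℤ) : ℝ)| ≤ 1 :=
    mul_le_one₀ (Real.tanh_lt_one _).le (Real.tanh_nonneg_s11 (abs_nonneg _))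
      (Real.tanh_lt_one _).le
  have := sub_nonneg.2 htanh
  unfold IBsymbol
  positivity

lemma abs_mul_one_sub_tanh_mul_tanh_le (k m : ℤ) :
    |(k : ℝ)| * (1 - Real.tanh |(k : ℝ)| * Real.tanh |((k - m : ℤ) : ℝ)|) ≤
      2 * (|(m : ℝ)| + 1) := by
  have hdiff : |(|(k : ℝ)| - |((k - m : ℤ) : ℝ)|)| ≤ |(m : ℝ)| := by
    simpa using abs_abs_sub_abs_le_abs_sub (k : ℝ) ((k - m : ℤ) : ℝ)
  have := Real.mul_one_sub_tanh_mul_tanh_le (abs_nonneg (k : ℝ)) (abs_nonneg ((k - m : ℤ) : ℝ))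
  linarith [abs_nonneg (m : ℝ)]

lemma IBsymbol_le (k m : ℤ) :
    IBsymbol k m ≤ 2 * (|(m : ℝ)| + 1) * |((k - m : ℤ) : ℝ)| ^ 3 :=
  calc IBsymbol k m
      = |(k : ℝ)| * (1 - Real.tanh |(k : ℝ)| * Real.tanh |((k - m : ℤ) : ℝ)|) *
          |((k - m : ℤ) : ℝ)| ^ 3 := by unfold IBsymbol; ring
    _ ≤ 2 * (|(m : ℝ)| + 1) * |((k - m : ℤ) : ℝ)| ^ 3 :=
        mul_le_mul_of_nonneg_right (abs_mul_one_sub_tanh_mul_tanh_le k m) (by positivity)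

lemma norm_IBsymbol_mul_le (h V : Coeffs) (k m : ℤ) :
    ‖(IBsymbol k m : ℂ) * h m * V (k - m)‖ ≤
      2 * ((|(m : ℝ)| + 1) * ‖h m‖) * (|((k - m : ℤ) : ℝ)| ^ 3 * ‖V (k - m)‖) := by
  rw [norm_mul, norm_mul, Complex.norm_real, Real.norm_of_nonneg (IBsymbol_nonneg k m)]
  calc IBsymbol k m * ‖h m‖ * ‖V (k - m)‖
      ≤ 2 * (|(m : ℝ)| + 1) * |((k - m : ℤ) : ℝ)| ^ 3 * ‖h m‖ * ‖V (k - m)‖ := by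
        gcongr; exact IBsymbol_le k m
    _ = _ := by ring

/-- the smooth-remainder part satisfies
`Σ_k |Î_B(k)| ≤ C (‖h‖_{A¹} + ‖h‖_{A⁰}) ‖V‖_{A³}` for zero-mean `h ∈ A¹`, `V ∈ A³`. -/
theorem IB_bound :
    ∃ C > 0, ∀ h V : Coeffs, h 0 = 0 → V 0 = 0 → InA 1 h → InA 3 V →
      (∑' k : ℤ, ‖IB h V k‖) ≤ C * (Anorm 1 h + Anorm 0 h) * Anorm 3 V := by
  refine ⟨2, two_pos, fun h V _ _ hh hV => ?_⟩
  have hA := hh.hasSum_abs_add_one_mul_norm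
  have hB : HasSum (fun n : ℤ => |(n : ℝ)| ^ 3 * ‖V n‖) (Anorm 3 V) := InA.hasSum_pow hV
  calc ∑' k, ‖IB h V k‖
      ≤ (∑' m : ℤ, 2 * ((|(m : ℝ)| + 1) * ‖h m‖)) * ∑' n : ℤ, |(n : ℝ)| ^ 3 * ‖V n‖ :=
        tsum_norm_tsum_le_of_norm_le_mul (fun _ => by positivity) (fun _ => by positivity)
          (hA.summable.mul_left 2) hB.summable (norm_IBsymbol_mul_le h V)
    _ = 2 * (Anorm 1 h + Anorm 0 h) * Anorm 3 V := by
        rw [tsum_mul_left, hA.tsum_eq, hB.tsum_eq]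
end
end
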